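/- arXiv:2411.13272 — 6 statements merged into one kernel-verified Lean document; each statement's English description precedes it below -/
import Mathlib

section
/- Let G be a locally compact topological group and let C = C⁻¹ be a compact neighborhood of the identity. Then for every compact D ⊆ G, a maximal subset of CD whose points are pairwise not related by the entourage Δ_{C°} (where C° is the interior of C) is finite; consequently G has bounded geometry with gauge Δ_C, i.e., sup over x ∈ G of the Δ_C-capacity of the sets Δ_D[Δ_C[x]] is finite for every compact D. -/
/-!
Choose an open `V ∋ 1` with `V⁻¹ * V ⊆ N`. Each translate `g • V` meets an `N`-separated set
in at most one point, and a compact `K` is covered by finitely many translates `g • V`, hence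
every translate `x • K` by as many; this bounds `N`-separated subsets of `x • K` uniformly in `x`.
Apply this with `N = interior C`, `K = C * D`, and with `N = C`, `K = C * D ∪ C * D⁻¹`.
-/

open Pointwise Topology

section
variable {G : Type*} [Group G]

theorem Set.Pairwise.subsingleton_inter_smul {N W S : Set G}
    (hS : S.Pairwise fun a b => a⁻¹ * b ∉ N) (hW : W⁻¹ * W ⊆ N) (g : G) :
    (S ∩ g • W).Subsingleton := by
  rintro _ ⟨ha, w₁, hw₁, rfl⟩ _ ⟨hb, w₂, hw₂, rfl⟩
  refine hS.eq ha hb fun h => h ?_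
  simpa [smul_eq_mul, mul_assoc] using hW (Set.mul_mem_mul (Set.inv_mem_inv.2 hw₁) hw₂)

theorem Set.Pairwise.finite_and_ncard_le_of_subset_biUnion_smul {ι : Type*} {N W S : Set G}
    (hS : S.Pairwise fun a b => a⁻¹ * b ∉ N) (hW : W⁻¹ * W ⊆ N) (t : Finset ι) (g : ι → G)
    (hcover : S ⊆ ⋃ i ∈ t, g i • W) : S.Finite ∧ S.ncard ≤ t.card := by
  have hpieces : S = ⋃ i ∈ t, S ∩ g i • W := by
    rw [← Set.inter_iUnion₂]; exact (Set.inter_eq_left.2 hcover).symm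
  have hfin : S.Finite := hpieces ▸ t.finite_toSet.biUnion fun i _ =>
    (hS.subsingleton_inter_smul hW (g i)).finite
  refine ⟨hfin, ?_⟩
  calc S.ncard = (⋃ i ∈ t, S ∩ g i • W).ncard := congrArg Set.ncard hpieces
    _ ≤ ∑ i ∈ t, (S ∩ g i • W).ncard := t.set_ncard_biUnion_le _
    _ ≤ ∑ _i ∈ t, 1 := Finset.sum_le_sum fun i _ =>
        have h := hS.subsingleton_inter_smul hW (g i)
        (Set.ncard_le_one h.finite).2 fun _ ha _ hb => h ha hb
    _ = t.card := by simp

theorem exists_open_nhds_one_inv_mul_subset [TopologicalSpace G] [IsTopologicalGroup G]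
    {N : Set G} (hN : N ∈ 𝓝 1) : ∃ V : Set G, IsOpen V ∧ (1 : G) ∈ V ∧ V⁻¹ * V ⊆ N := by
  obtain ⟨U, hUo, hU1, hUN⟩ := exists_open_nhds_one_mul_subset hN
  refine ⟨U ∩ U⁻¹, hUo.inter hUo.inv, ⟨hU1, by simpa using hU1⟩, ?_⟩
  exact (Set.mul_subset_mul (Set.inv_subset.2 Set.inter_subset_right)
    Set.inter_subset_left).trans hUN

theorem IsCompact.exists_ncard_le_of_pairwise_inv_mul_notMem [TopologicalSpace G]
    [IsTopologicalGroup G] {N K : Set G} (hK : IsCompact K) (hN : N ∈ 𝓝 1) :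
    ∃ n : ℕ, ∀ x : G, ∀ S ⊆ x • K, (S.Pairwise fun a b => a⁻¹ * b ∉ N) →
      S.Finite ∧ S.ncard ≤ n := by
  obtain ⟨V, hVo, hV1, hVN⟩ := exists_open_nhds_one_inv_mul_subset hN
  obtain ⟨t, ht⟩ := hK.elim_finite_subcover (fun g : G => g • V) (fun g => hVo.smul g)
    fun k _ => Set.mem_iUnion.2 ⟨k, Set.mem_smul_set.2 ⟨1, hV1, mul_one k⟩⟩
  refine ⟨t.card, fun x S hSK hS => hS.finite_and_ncard_le_of_subset_biUnion_smul hVN t (x * ·) ?_⟩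
  refine hSK.trans ?_
  rintro _ ⟨k, hk, rfl⟩
  obtain ⟨g, hg, v, hv, rfl⟩ := Set.mem_iUnion₂.1 (ht hk)
  exact Set.mem_biUnion hg ⟨v, hv, by simp [smul_eq_mul, mul_assoc]⟩

end

theorem stmt3_general {G : Type*} [Group G] [TopologicalSpace G] [IsTopologicalGroup G]
    (C : Set G) (hC : IsCompact C) (hCnbhd : C ∈ nhds (1 : G)) :
    ∀ D : Set G, IsCompact D →
      -- any Δ_{C°}-separated subset of C·D is finite
      ((∀ S : Set G, S ⊆ C * D →
          (S.Pairwise fun x y => x⁻¹ * y ∉ interior C) → S.Finite) ∧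
      -- bounded geometry with gauge Δ_C: uniform finite bound on the Δ_C-capacity
      -- of the sets Δ_D[Δ_C[x]] and Δ_{D⁻¹}[Δ_C[x]] = x·C·D, x·C·D⁻¹
      (∃ nD : ℕ, ∀ x : G, ∀ S : Set G,
          (S ⊆ x • (C * D) ∨ S ⊆ x • (C * D⁻¹)) →
          (S.Pairwise fun a b => a⁻¹ * b ∉ C) → S.Finite ∧ S.ncard ≤ nD)) := by
  intro D hD
  obtain ⟨_, hCD⟩ := (hC.mul hD).exists_ncard_le_of_pairwise_inv_mul_notMem
    (interior_mem_nhds.2 hCnbhd)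
  obtain ⟨n, hCDD⟩ := ((hC.mul hD).union (hC.mul hD.inv)).exists_ncard_le_of_pairwise_inv_mul_notMem
    hCnbhd
  refine ⟨fun S hS hsep => (hCD 1 S (by rwa [one_smul]) hsep).1, n, fun x S hS hsep => ?_⟩
  refine hCDD x S ?_ hsep
  rw [Set.smul_set_union]
  exact hS.elim (fun h => h.trans Set.subset_union_left) (fun h => h.trans Set.subset_union_right)

theorem stmt3 {G : Type*} [Group G] [TopologicalSpace G] [IsTopologicalGroup G]
    [LocallyCompactSpace G]
    (C : Set G) (hC : IsCompact C) (hCsymm : C⁻¹ = C) (hCnbhd : C ∈ nhds (1 : G)) :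
    ∀ D : Set G, IsCompact D →
      -- any Δ_{C°}-separated subset of C·D is finite
      ((∀ S : Set G, S ⊆ C * D →
          (S.Pairwise fun x y => x⁻¹ * y ∉ interior C) → S.Finite) ∧
      -- bounded geometry with gauge Δ_C: uniform finite bound on the Δ_C-capacity
      -- of the sets Δ_D[Δ_C[x]] and Δ_{D⁻¹}[Δ_C[x]] = x·C·D, x·C·D⁻¹
      (∃ nD : ℕ, ∀ x : G, ∀ S : Set G,
          (S ⊆ x • (C * D) ∨ S ⊆ x • (C * D⁻¹)) →
          (S.Pairwise fun a b => a⁻¹ * b ∉ C) → S.Finite ∧ S.ncard ≤ nD)) :=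
  stmt3_general C hC hCnbhd
end

section
/- Let G be a group and χ : G → ℝ a group homomorphism with χ ≠ 0, and set G_χ := {g ∈ G : χ(g) ≥ 0}. Then the group ring ℤ[G] is flat as a module over the monoid ring ℤ[G_χ]. More precisely, choosing t ∈ G with χ(t) < 0, the submodules tⁿ·ℤ[G_χ] for n ∈ ℕ form an increasing filtration of ℤ[G] by free ℤ[G_χ]-submodules of rank 1, whose union is ℤ[G]; hence ℤ[G] is a directed colimit of flat modules and therefore flat. -/
/-- The submonoid `G_χ = {g | χ(g) ≥ 0}` for a homomorphism `χ : G → ℝ`. -/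
def Gchi {G : Type*} [Group G] (χ : G → ℝ) (hom : ∀ g h : G, χ (g * h) = χ g + χ h) :
    Submonoid G where
  carrier := {g | 0 ≤ χ g}
  one_mem' := by
    have h := hom 1 1
    rw [one_mul] at h
    simp only [Set.mem_setOf_eq]
    linarith
  mul_mem' := by
    intro a b ha hb
    simp only [Set.mem_setOf_eq] at *
    rw [hom]
    linarith

/-!
Fix `t` with `χ t < 0`. Since `χ` is bounded below on the finite support of any element, every
finite family in `ℤ[G]` lies in one cyclic submodule `ℤ[G_χ] · tᴺ`; this submodule is free of
rank one because `ℤ[G_χ] → ℤ[G]` is injective and `tᴺ` is a unit. A relation `∑ rᵢ xᵢ = 0` with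
`xᵢ = bᵢ tᴺ` then reads `(∑ rᵢ bᵢ) tᴺ = 0`, so `∑ rᵢ bᵢ = 0` already in `ℤ[G_χ]` and the relation
is trivialized through the single generator `tᴺ`.
-/

open MonoidAlgebra

namespace MonoidAlgebra

variable {k G : Type*} [Semiring k] [Group G] (S : Submonoid G)

local notation "ι" => mapDomainRingHom k S.subtype

theorem exists_mapDomainRingHom_subtype_eq {z : k[G]} (hz : ∀ g ∈ z.coeff.support, g ∈ S) :
    ∃ r : k[S], ι r = z :=
  ⟨comapDomain _ Subtype.val_injective z,
    mapDomain_comapDomain (fun g hg => ⟨⟨g, hz g hg⟩, rfl⟩) _⟩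

theorem exists_eq_mapDomainRingHom_subtype_mul_single {g : G} {x : k[G]}
    (hx : ∀ h ∈ x.coeff.support, h * g⁻¹ ∈ S) : ∃ r : k[S], x = ι r * single g 1 := by
  obtain ⟨r, hr⟩ := exists_mapDomainRingHom_subtype_eq S (z := x * single g⁻¹ 1) fun h hh => by
    simpa using hx (h * g) (by simpa using hh)
  refine ⟨r, ?_⟩
  rw [hr, mul_assoc, single_mul_single, inv_mul_cancel, one_mul, ← one_def, mul_one]

theorem mapDomainRingHom_subtype_mul_single_injective (g : G) :
    Function.Injective fun r : k[S] => ι r * single g 1 := by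
  intro r s h
  have h' := congrArg (· * single g⁻¹ (1 : k)) h
  simp only [mul_assoc, single_mul_single, mul_inv_cancel, ← one_def, mul_one] at h'
  exact mapDomain_injective Subtype.val_injective h'

theorem exists_mapDomainRingHom_subtype_mul_single_eq {g g' : G} (hg : g * g'⁻¹ ∈ S) (r : k[S]) :
    ∃ r' : k[S], ι r * single g 1 = ι r' * single g' 1 := by
  refine ⟨r * single ⟨g * g'⁻¹, hg⟩ 1, ?_⟩
  rw [map_mul, mul_assoc]
  congr 1
  change _ = mapDomain _ _ * _
  rw [mapDomain_single, single_mul_single, mul_one]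
  exact congrArg (single · 1) (inv_mul_cancel_right g g').symm

theorem exists_trivialization_of_forall_eq_mul_single {n : ℕ} {r : Fin n → k[S]}
    {x : Fin n → k[G]} {g : G} {b : Fin n → k[S]} (hb : ∀ i, x i = ι (b i) * single g 1)
    (hrel : ∑ i, ι (r i) * x i = 0) :
    ∃ (m : ℕ) (y : Fin m → k[G]) (a : Fin n → Fin m → k[S]),
      (∀ j, ∑ i, r i * a i j = 0) ∧ ∀ i, x i = ∑ j, ι (a i j) * y j := by
  have hsum : ∑ i, r i * b i = 0 := by
    refine mapDomainRingHom_subtype_mul_single_injective S g ?_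
    simp only [map_sum, map_mul, Finset.sum_mul, mul_assoc, ← hb, hrel, map_zero, zero_mul]
  exact ⟨1, fun _ => single g 1, fun i _ => b i, fun _ => hsum, fun i => by simp [hb i]⟩

end MonoidAlgebra

theorem exists_nat_mul_le_of_neg {α : Type*} (f : α → ℝ) {c : ℝ} (hc : c < 0) (s : Finset α) :
    ∃ N : ℕ, ∀ a ∈ s, N * c ≤ f a := by
  obtain ⟨N, hN⟩ := (s.image fun a => ⌈f a / c⌉₊).exists_le
  refine ⟨N, fun a ha => (div_le_iff_of_neg hc).1 ?_⟩
  exact (Nat.le_ceil _).trans (Nat.cast_le.2 (hN _ (Finset.mem_image_of_mem _ ha)))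

section Character

variable {G : Type*} [Group G] {χ : G → ℝ}

theorem mem_Gchi (hom : ∀ g h : G, χ (g * h) = χ g + χ h) {g : G} :
    g ∈ Gchi χ hom ↔ 0 ≤ χ g :=
  Iff.rfl

theorem map_one_of_map_mul (hom : ∀ g h : G, χ (g * h) = χ g + χ h) : χ 1 = 0 := by
  simpa using hom 1 1

theorem map_inv_of_map_mul (hom : ∀ g h : G, χ (g * h) = χ g + χ h) (g : G) :
    χ g⁻¹ = -χ g := by
  have h := hom g g⁻¹
  rw [mul_inv_cancel, map_one_of_map_mul hom] at h
  linarith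

theorem map_pow_of_map_mul (hom : ∀ g h : G, χ (g * h) = χ g + χ h) (t : G) (n : ℕ) :
    χ (t ^ n) = n * χ t := by
  induction n with
  | zero => simp [map_one_of_map_mul hom]
  | succ n ih => rw [pow_succ, hom, ih]; push_cast; ring

theorem exists_neg_of_ne_zero (hom : ∀ g h : G, χ (g * h) = χ g + χ h) (hχ : χ ≠ 0) :
    ∃ t, χ t < 0 := by
  obtain ⟨g, hg : χ g ≠ 0⟩ := Function.ne_iff.1 hχ
  rcases hg.lt_or_gt with h | h
  · exact ⟨g, h⟩
  · exact ⟨g⁻¹, by rw [map_inv_of_map_mul hom]; linarith⟩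

theorem MonoidAlgebra.exists_eq_mapDomainRingHom_Gchi_mul_single_pow {k : Type*} [Semiring k]
    (hom : ∀ g h : G, χ (g * h) = χ g + χ h) {t : G} {N : ℕ} {x : MonoidAlgebra k G}
    (hx : ∀ g ∈ x.coeff.support, N * χ t ≤ χ g) :
    ∃ r, x = mapDomainRingHom k (Gchi χ hom).subtype r * single (t ^ N) 1 := by
  refine exists_eq_mapDomainRingHom_subtype_mul_single _ fun g hg => ?_
  rw [mem_Gchi, hom, map_inv_of_map_mul hom, map_pow_of_map_mul hom]
  linarith [hx g hg]

end Character

theorem stmt5 {G : Type*} [Group G] (χ : G → ℝ)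
    (hom : ∀ g h : G, χ (g * h) = χ g + χ h) (hχ : χ ≠ 0) :
    letI R := MonoidAlgebra ℤ (Gchi χ hom)
    letI ι : R →+* MonoidAlgebra ℤ G :=
      MonoidAlgebra.mapDomainRingHom ℤ (Gchi χ hom).subtype
    -- ℤ[G] is flat as a ℤ[G_χ]-module (equational criterion for flatness, the
    -- scalar action of `r : ℤ[G_χ]` on `x : ℤ[G]` being `ι r * x`):
    -- every linear relation stems from linear relations in ℤ[G_χ]
    (∀ (n : ℕ) (r : Fin n → R) (x : Fin n → MonoidAlgebra ℤ G),
      (∑ i, ι (r i) * x i) = 0 →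
      ∃ (m : ℕ) (y : Fin m → MonoidAlgebra ℤ G) (a : Fin n → Fin m → R),
        (∀ j, ∑ i, r i * a i j = 0) ∧ ∀ i, x i = ∑ j, ι (a i j) * y j) ∧
    -- more precisely: for t with χ(t) < 0, the submodules ℤ[G_χ]·tⁿ form an
    -- increasing filtration of ℤ[G] by free rank-one ℤ[G_χ]-submodules
    ∀ t : G, χ t < 0 →
      letI M : ℕ → Set (MonoidAlgebra ℤ G) :=
        fun nn => {x | ∃ r : R, x = ι r * MonoidAlgebra.single (t ^ nn) 1}
      (∀ nn : ℕ, M nn ⊆ M (nn + 1)) ∧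
      (⋃ nn : ℕ, M nn) = Set.univ ∧
      (∀ nn : ℕ,
        Function.Injective fun r : R => ι r * MonoidAlgebra.single (t ^ nn) (1 : ℤ)) := by
  classical
  obtain ⟨t₀, ht₀⟩ := exists_neg_of_ne_zero hom hχ
  refine ⟨fun n r x hrel => ?_, fun t ht => ⟨fun N => ?_, ?_,
    fun N => mapDomainRingHom_subtype_mul_single_injective _ _⟩⟩
  · obtain ⟨N, hN⟩ := exists_nat_mul_le_of_neg χ ht₀
      (Finset.univ.biUnion fun i => (x i).coeff.support)
    choose b hb using fun i => exists_eq_mapDomainRingHom_Gchi_mul_single_pow hom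
      fun g hg => hN g (Finset.mem_biUnion.2 ⟨i, Finset.mem_univ i, hg⟩)
    exact exists_trivialization_of_forall_eq_mul_single _ hb hrel
  · rintro _ ⟨r, rfl⟩
    refine exists_mapDomainRingHom_subtype_mul_single_eq _ ?_ r
    rw [pow_succ', mul_inv_rev, mul_inv_cancel_left, mem_Gchi, map_inv_of_map_mul hom]
    linarith
  · refine Set.eq_univ_of_forall fun x => Set.mem_iUnion.2 ?_
    obtain ⟨N, hN⟩ := exists_nat_mul_le_of_neg χ ht x.coeff.support
    exact ⟨N, exists_eq_mapDomainRingHom_Gchi_mul_single_pow hom hN⟩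
end

section
/- Let G be a group, χ : G → ℝ a nonzero homomorphism, and F a free ℤ[G]-module. Then F is flat as a ℤ[G_χ]-module, where G_χ := {g : χ(g) ≥ 0}: every ℤ[G_χ]-linear relation Σᵢ rᵢxᵢ = 0 with rᵢ ∈ ℤ[G_χ], xᵢ ∈ F stems from linear relations in ℤ[G_χ], i.e., there exist yⱼ ∈ F and a_{ij} ∈ ℤ[G_χ] with Σᵢ rᵢa_{ij} = 0 for all j and xᵢ = Σⱼ a_{ij}yⱼ for all i. -/
open Function

namespace MonoidAlgebra

variable {k M : Type*} [Semiring k] [Monoid M]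

lemma mapDomainRingHom_injective {N : Type*} [Monoid N] {f : M →* N} (hf : Injective f) :
    Injective (mapDomainRingHom k f) :=
  mapDomain_injective hf

lemma mem_range_mapDomainRingHom_subtype {S : Submonoid M} {x : k[M]}
    (hx : ∀ m ∈ x.coeff.support, m ∈ S) : x ∈ Set.range (mapDomainRingHom k S.subtype) :=
  ⟨comapDomain _ Subtype.val_injective x,
    mapDomain_comapDomain (fun m hm => ⟨⟨m, hx m hm⟩, rfl⟩) _⟩

end MonoidAlgebra

theorem Module.Basis.exists_relation_lift_of_mul_mem_range {R A F κ : Type*} [Semiring R]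
    [Semiring A] [AddCommMonoid F] [Module A F] (b : Module.Basis κ A F) {ι : R →+* A}
    (hι : Function.Injective ι) {u v : A} (huv : u * v = 1) {n : ℕ} (r : Fin n → R)
    (x : Fin n → F) (hx : ∑ i, ι (r i) • x i = 0) (hu : ∀ i k, b.repr (x i) k * u ∈ Set.range ι) :
    ∃ (m : ℕ) (y : Fin m → F) (a : Fin n → Fin m → R),
      (∀ j, ∑ i, r i * a i j = 0) ∧ ∀ i, x i = ∑ j, ι (a i j) • y j := by
  classical
  choose a ha using hu
  have hcoord (k : κ) : ∑ i, ι (r i) * b.repr (x i) k = 0 := by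
    simpa [Finsupp.finsetSum_apply] using DFunLike.congr_fun (congrArg b.repr hx) k
  let T := Finset.univ.biUnion fun i => (b.repr (x i)).support
  let e := T.equivFin.symm
  refine ⟨T.card, fun j => v • b (e j), fun i j => a i (e j), fun j => hι ?_, fun i => ?_⟩
  · simp_rw [map_sum, map_mul, ha, ← mul_assoc, ← Finset.sum_mul, hcoord, zero_mul, map_zero]
  · calc x i = ∑ k ∈ T, b.repr (x i) k • b k := by
          conv_lhs => rw [← b.linearCombination_repr (x i)]
          exact Finsupp.sum_of_support_subset _
            (fun k hk => Finset.mem_biUnion.mpr ⟨i, Finset.mem_univ i, hk⟩) _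
            (fun k _ => zero_smul _ _)
      _ = ∑ j, b.repr (x i) (e j) • b (e j) := by
          rw [← Finset.sum_coe_sort T, ← e.sum_comp]
      _ = ∑ j, ι (a i (e j)) • v • b (e j) := by
          simp_rw [smul_smul, ha, mul_assoc, huv, mul_one]

section Gchi

variable {G : Type*} [Group G] {χ : G → ℝ}

lemma exists_le_apply_of_ne_zero (hom : ∀ g h : G, χ (g * h) = χ g + χ h) (hχ : χ ≠ 0)
    (C : ℝ) : ∃ g, C ≤ χ g := by
  let f : Additive G →+ ℝ := AddMonoidHom.mk' (fun g => χ g.toMul) hom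
  obtain ⟨g₀, hg₀⟩ := Function.ne_iff.mp hχ
  obtain ⟨g₁, hg₁⟩ : ∃ g₁ : Additive G, 0 < f g₁ := by
    rcases (show f (.ofMul g₀) ≠ 0 from hg₀).lt_or_gt with h | h
    · exact ⟨-.ofMul g₀, by rw [map_neg]; linarith⟩
    · exact ⟨.ofMul g₀, h⟩
  obtain ⟨N, hN⟩ := Archimedean.arch C hg₁
  refine ⟨(N • g₁).toMul, ?_⟩
  change C ≤ f (N • g₁)
  rwa [map_nsmul]

lemma exists_mul_mem_Gchi (hom : ∀ g h : G, χ (g * h) = χ g + χ h) (hχ : χ ≠ 0)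
    (U : Finset G) : ∃ g, ∀ h ∈ U, h * g ∈ Gchi χ hom := by
  obtain ⟨g, hg⟩ := exists_le_apply_of_ne_zero hom hχ (∑ h ∈ U, |χ h|)
  refine ⟨g, fun h hh => ?_⟩
  have hbound : -χ h ≤ ∑ h ∈ U, |χ h| :=
    (neg_le_abs _).trans (Finset.single_le_sum (fun h _ => abs_nonneg (χ h)) hh)
  change 0 ≤ χ (h * g)
  linarith [hom h g]

lemma exists_mul_of_mem_range_Gchi {k : Type*} [Semiring k]
    (hom : ∀ g h : G, χ (g * h) = χ g + χ h) (hχ : χ ≠ 0)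
    {s : Set (MonoidAlgebra k G)} (hs : s.Finite) :
    ∃ g, ∀ p ∈ s, p * MonoidAlgebra.of k G g ∈
      Set.range (MonoidAlgebra.mapDomainRingHom k (Gchi χ hom).subtype) := by
  classical
  obtain ⟨g, hg⟩ := exists_mul_mem_Gchi hom hχ (hs.toFinset.biUnion (·.coeff.support))
  refine ⟨g, fun p hp => MonoidAlgebra.mem_range_mapDomainRingHom_subtype fun m hm => ?_⟩
  obtain ⟨h, hh, rfl⟩ :=
    Finset.mem_image.mp (MonoidAlgebra.support_coeff_mul_single_subset _ _ _ hm)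
  exact hg h (Finset.mem_biUnion.mpr ⟨p, hs.mem_toFinset.mpr hp, hh⟩)

end Gchi

theorem stmt6 {G : Type*} [Group G] (χ : G → ℝ)
    (hom : ∀ g h : G, χ (g * h) = χ g + χ h) (hχ : χ ≠ 0)
    (F : Type*) [AddCommGroup F] [Module (MonoidAlgebra ℤ G) F]
    [Module.Free (MonoidAlgebra ℤ G) F] :
    letI R := MonoidAlgebra ℤ (Gchi χ hom)
    letI ι : R →+* MonoidAlgebra ℤ G :=
      MonoidAlgebra.mapDomainRingHom ℤ (Gchi χ hom).subtype
    -- F is flat as a ℤ[G_χ]-module (the action of `r : ℤ[G_χ]` being `ι r • ·`):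
    -- every ℤ[G_χ]-linear relation in F stems from linear relations in ℤ[G_χ]
    ∀ (n : ℕ) (r : Fin n → R) (x : Fin n → F),
      (∑ i, ι (r i) • x i) = 0 →
      ∃ (m : ℕ) (y : Fin m → F) (a : Fin n → Fin m → R),
        (∀ j, ∑ i, r i * a i j = 0) ∧ ∀ i, x i = ∑ j, ι (a i j) • y j := by
  intro n r x hx
  let b := Module.Free.chooseBasis (MonoidAlgebra ℤ G) F
  obtain ⟨g, hg⟩ := exists_mul_of_mem_range_Gchi hom hχ
    (Set.finite_iUnion fun i => (b.repr (x i)).finite_range)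
  have hinv : MonoidAlgebra.of ℤ G g * MonoidAlgebra.of ℤ G g⁻¹ = 1 := by
    rw [← map_mul, mul_inv_cancel, map_one]
  exact b.exists_relation_lift_of_mul_mem_range
    (MonoidAlgebra.mapDomainRingHom_injective (Gchi χ hom).subtype_injective) hinv r x hx
    fun i k => hg _ (Set.mem_iUnion.mpr ⟨i, k, rfl⟩)
end

section
/- Let G be a finitely generated group with word metric d and let χ : G → ℝ be a nonzero homomorphism. Then χ ∈ Σ¹(G;ℤ) (equivalently, G_χ is connected as a subgraph of some Cayley graph of G) if and only if G_χ with the metric induced from G is coarsely connected, i.e., there exists c ≥ 0 such that any two points of G_χ can be joined by a sequence of points in G_χ with consecutive distances at most c. -/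
/-!
A finite generating set `Y` lies in some ball `X ^ c`, so a `Y`-path is an `X`-path with steps of
length `≤ c`; conversely the ball `X ^ (c + 1)` is itself a finite symmetric generating set for
which every `c`-step for `X` is a single step.
-/

open Pointwise

/-- There is a `c`-path in `A` (steps of word-length `≤ c` w.r.t. `X`) from `x` to `y`. -/
def PathIn {G : Type*} [Group G] (X : Set G) (A : Set G) (c : ℕ) (x y : G) : Prop :=
  ∃ (n : ℕ) (p : Fin (n + 1) → G), p 0 = x ∧ p (Fin.last n) = y ∧
    (∀ i, p i ∈ A) ∧ ∀ i : Fin n, (p i.castSucc)⁻¹ * p i.succ ∈ X ^ c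

theorem PathIn.mono_steps {G : Type*} [Group G] {X Y A : Set G} {c d : ℕ} {x y : G}
    (hXY : X ^ c ⊆ Y ^ d) (h : PathIn X A c x y) : PathIn Y A d x y := by
  obtain ⟨n, p, h0, hlast, hA, hsteps⟩ := h
  exact ⟨n, p, h0, hlast, hA, fun i => hXY (hsteps i)⟩

theorem Set.Finite.pow {M : Type*} [Monoid M] {X : Set M} (hX : X.Finite) (n : ℕ) :
    (X ^ n).Finite := by
  classical
  simpa only [Finset.coe_pow, Set.Finite.coe_toFinset] using (hX.toFinset ^ n).finite_toSet

section Group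

variable {G : Type*} [Group G] {X : Set G}

theorem exists_mem_pow_of_mem_closure (hXsymm : X⁻¹ = X) {g : G}
    (hg : g ∈ Subgroup.closure X) : ∃ n, g ∈ X ^ n := by
  induction hg using Subgroup.closure_induction with
  | mem x hx => exact ⟨1, by simpa⟩
  | one => exact ⟨0, by simp⟩
  | mul x y _ _ ihx ihy =>
    obtain ⟨m, hm⟩ := ihx
    obtain ⟨n, hn⟩ := ihy
    exact ⟨m + n, by rw [pow_add]; exact Set.mul_mem_mul hm hn⟩
  | inv x _ ih =>
    obtain ⟨n, hn⟩ := ih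
    exact ⟨n, by rw [← hXsymm, inv_pow]; exact Set.inv_mem_inv.mpr hn⟩

theorem exists_subset_pow_of_finite_of_subset_closure (hXsymm : X⁻¹ = X) (hX1 : (1 : G) ∈ X)
    {Y : Set G} (hYfin : Y.Finite) (hY : Y ⊆ Subgroup.closure X) : ∃ c, Y ⊆ X ^ c := by
  choose! len hlen using fun y (hy : y ∈ Y) => exists_mem_pow_of_mem_closure hXsymm (hY hy)
  refine ⟨hYfin.toFinset.sup len, fun y hy => ?_⟩
  exact Set.pow_subset_pow_right hX1 (Finset.le_sup (hYfin.mem_toFinset.mpr hy)) (hlen y hy)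

end Group

theorem stmt10_general {G : Type*} [Group G] (X : Set G)
    (hXfin : X.Finite) (hXsymm : X⁻¹ = X) (hX1 : (1 : G) ∈ X)
    (hXgen : Subgroup.closure X = ⊤)
    (χ : G → ℝ) :
    -- χ ∈ Σ¹(G;ℤ): G_χ is connected as a subgraph of the Cayley graph of G with
    -- respect to some finite symmetric generating set Y (steps are single generators)
    ((∃ Y : Set G, Y.Finite ∧ Y⁻¹ = Y ∧ (1 : G) ∈ Y ∧ Subgroup.closure Y = ⊤ ∧
        ∀ x ∈ {g : G | 0 ≤ χ g}, ∀ y ∈ {g : G | 0 ≤ χ g},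
          PathIn Y {g : G | 0 ≤ χ g} 1 x y) ↔
      -- G_χ with the metric induced from (G, d_X) is coarsely connected
      (∃ c : ℕ, ∀ x ∈ {g : G | 0 ≤ χ g}, ∀ y ∈ {g : G | 0 ≤ χ g},
          PathIn X {g : G | 0 ≤ χ g} c x y)) := by
  constructor
  · rintro ⟨Y, hYfin, -, -, -, hYpath⟩
    obtain ⟨c, hYc⟩ := exists_subset_pow_of_finite_of_subset_closure hXsymm hX1 hYfin
      (by simp [hXgen])
    exact ⟨c, fun x hx y hy => (hYpath x hx y hy).mono_steps (by rwa [pow_one])⟩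
  · rintro ⟨c, hXpath⟩
    -- `X ^ (c + 1)` rather than `X ^ c`, so that it still generates when `c = 0`
    refine ⟨X ^ (c + 1), hXfin.pow _, by rw [← inv_pow, hXsymm], Set.one_mem_pow hX1,
      by rw [Subgroup.closure_pow hX1 c.succ_ne_zero, hXgen], fun x hx y hy => ?_⟩
    exact (hXpath x hx y hy).mono_steps (by
      rw [pow_one]; exact Set.pow_subset_pow_right hX1 c.le_succ)

theorem stmt10 {G : Type*} [Group G] (X : Set G)
    (hXfin : X.Finite) (hXsymm : X⁻¹ = X) (hX1 : (1 : G) ∈ X)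
    (hXgen : Subgroup.closure X = ⊤)
    (χ : G → ℝ) (hom : ∀ g h : G, χ (g * h) = χ g + χ h) (hχ : χ ≠ 0) :
    -- χ ∈ Σ¹(G;ℤ): G_χ is connected as a subgraph of the Cayley graph of G with
    -- respect to some finite symmetric generating set Y (steps are single generators)
    ((∃ Y : Set G, Y.Finite ∧ Y⁻¹ = Y ∧ (1 : G) ∈ Y ∧ Subgroup.closure Y = ⊤ ∧
        ∀ x ∈ {g : G | 0 ≤ χ g}, ∀ y ∈ {g : G | 0 ≤ χ g},
          PathIn Y {g : G | 0 ≤ χ g} 1 x y) ↔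
      -- G_χ with the metric induced from (G, d_X) is coarsely connected
      (∃ c : ℕ, ∀ x ∈ {g : G | 0 ≤ χ g}, ∀ y ∈ {g : G | 0 ≤ χ g},
          PathIn X {g : G | 0 ≤ χ g} c x y)) :=
  stmt10_general X hXfin hXsymm hX1 hXgen χ
end

section
/- Let G be a finitely generated group with word metric d and χ : G → ℝ a nonzero homomorphism. If the subspace G_χ := {g : χ(g) ≥ 0} of (G,d) is of type FP_m in the coarse sense (the directed system of reduced simplicial homology groups of its Vietoris–Rips complexes is essentially trivial in degrees 0,...,m−1), then so is G itself. In particular, for each 0 ≤ q ≤ m−1: if the reduced homology H̃_q of the Rips complex of G_χ at scale k vanishes in the Rips complex at scale l, then any cycle z in C_q(VR_k(G)) becomes a boundary in C_q(VR_l(G)). -/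
/-!
Left translation by `g ∈ G` is an isometry of the word metric, so it maps Rips chains to Rips
chains of the same scale and commutes with the boundary. If `χ t > 0`, a large power `tⁿ`
translates the finitely many vertices of any cycle `z` of `VR_k(G)` into `G_χ`; a filling of
`tⁿ z` in `VR_l(G_χ)` translated back by `t⁻ⁿ` fills `z` in `VR_l(G)`.
-/

open Pointwise

/-- Simplicial `q`-chains on `V`. -/
abbrev Ch (V : Type*) (q : ℕ) := (Fin (q + 1) → V) →₀ ℤ

/-- The simplicial boundary map. -/
noncomputable def bd (V : Type*) (q : ℕ) : Ch V (q + 1) →ₗ[ℤ] Ch V q :=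
  Finsupp.lift (Ch V q) ℤ (Fin (q + 2) → V) fun f =>
    ∑ i : Fin (q + 2), ((-1 : ℤ) ^ (i : ℕ)) • Finsupp.single (f ∘ i.succAbove) 1

/-- The augmentation. -/
noncomputable def aug (V : Type*) : Ch V 0 →ₗ[ℤ] ℤ :=
  Finsupp.lift ℤ ℤ (Fin 1 → V) fun _ => (1 : ℤ)

/-- A chain of the Vietoris–Rips complex of `A ⊆ G` at scale `k` (with vertices in
`A` and pairwise word-distances `≤ k` w.r.t. the generating set `X`). -/
def InVR {G : Type*} [Group G] (X A : Set G) (k q : ℕ) (c : Ch G q) : Prop :=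
  ∀ f ∈ c.support, (∀ i j, (f i)⁻¹ * f j ∈ X ^ k) ∧ ∀ i, f i ∈ A

/-- Cycle condition: in degree `0` a *reduced* cycle is an augmentation-zero chain,
in positive degrees a cycle is a chain with zero boundary. -/
def IsCyc {G : Type*} [Group G] : ∀ q : ℕ, Ch G q → Prop
  | 0, c => aug G c = 0
  | (q + 1), c => bd G q c = 0

/-- `A ⊆ G` is of type FP_m in the coarse sense: the directed system of reduced
homology of its Vietoris–Rips complexes is essentially trivial in degrees `< m`. -/
def CoarseFP {G : Type*} [Group G] (X A : Set G) (m : ℕ) : Prop :=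
  ∀ q < m, ∀ k : ℕ, ∃ l : ℕ, k ≤ l ∧ ∀ z : Ch G q, InVR X A k q z → IsCyc q z →
    ∃ c : Ch G (q + 1), InVR X A l (q + 1) c ∧ bd G q c = z

lemma bd_single {V : Type*} (q : ℕ) (f : Fin (q + 2) → V) (b : ℤ) :
    bd V q (Finsupp.single f b) =
      b • ∑ i : Fin (q + 2), ((-1 : ℤ) ^ (i : ℕ)) • Finsupp.single (f ∘ i.succAbove) 1 := by
  simp [bd, Finsupp.lift_apply, Finsupp.sum_single_index]

section Translate

variable {G : Type*} [Group G]

noncomputable def translateChain (g : G) (q : ℕ) : Ch G q →ₗ[ℤ] Ch G q :=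
  Finsupp.lmapDomain ℤ ℤ fun f i => g * f i

lemma translateChain_single (g : G) (q : ℕ) (f : Fin (q + 1) → G) (b : ℤ) :
    translateChain g q (Finsupp.single f b) = Finsupp.single (fun i => g * f i) b := by
  simp [translateChain, Finsupp.mapDomain_single]

lemma bd_translateChain (g : G) (q : ℕ) (c : Ch G (q + 1)) :
    bd G q (translateChain g (q + 1) c) = translateChain g q (bd G q c) := by
  suffices (bd G q).comp (translateChain g (q + 1)) = (translateChain g q).comp (bd G q) from
    LinearMap.congr_fun this c
  refine Finsupp.lhom_ext fun f b => ?_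
  simp only [LinearMap.comp_apply, translateChain_single, bd_single, map_smul, map_sum]
  rfl

lemma aug_translateChain (g : G) (c : Ch G 0) : aug G (translateChain g 0 c) = aug G c := by
  suffices (aug G).comp (translateChain g 0) = aug G from LinearMap.congr_fun this c
  refine Finsupp.lhom_ext fun f b => ?_
  simp [translateChain_single, aug, Finsupp.sum_single_index]

lemma translateChain_inv_translateChain (g : G) (q : ℕ) (c : Ch G q) :
    translateChain g⁻¹ q (translateChain g q c) = c := by
  simp only [translateChain, Finsupp.lmapDomain_apply, ← Finsupp.mapDomain_comp]
  convert Finsupp.mapDomain_id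
  ext f i
  simp

lemma exists_eq_of_mem_support_translateChain {g : G} {q : ℕ} {c : Ch G q} {f : Fin (q + 1) → G}
    (hf : f ∈ (translateChain g q c).support) : ∃ f₀ ∈ c.support, f = fun i => g * f₀ i := by
  classical
  obtain ⟨f₀, hf₀, rfl⟩ := Finset.mem_image.mp (Finsupp.mapDomain_support hf)
  exact ⟨f₀, hf₀, rfl⟩

lemma IsCyc.translateChain {q : ℕ} {z : Ch G q} (hz : IsCyc q z) (g : G) :
    IsCyc q (translateChain g q z) := by
  cases q with
  | zero => exact (aug_translateChain g z).trans hz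
  | succ q => show bd G q _ = 0; rw [bd_translateChain, hz, map_zero]

lemma InVR.translateChain {X A B : Set G} {k q : ℕ} {c : Ch G q} (hc : InVR X A k q c) {g : G}
    (hB : ∀ f ∈ c.support, ∀ i, g * f i ∈ B) : InVR X B k q (translateChain g q c) := by
  intro f hf
  obtain ⟨f₀, hf₀, rfl⟩ := exists_eq_of_mem_support_translateChain hf
  refine ⟨fun i j => ?_, hB f₀ hf₀⟩
  simpa only [mul_inv_rev, mul_assoc, inv_mul_cancel_left] using (hc f₀ hf₀).1 i j

end Translate

def BoundsCycles {G : Type*} [Group G] (X A : Set G) (q k l : ℕ) : Prop :=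
  ∀ z : Ch G q, InVR X A k q z → IsCyc q z →
    ∃ c : Ch G (q + 1), InVR X A l (q + 1) c ∧ bd G q c = z

lemma boundsCycles_univ_of_translateChain {G : Type*} [Group G] {X A : Set G} {q k l : ℕ}
    (hA : BoundsCycles X A q k l)
    (htrans : ∀ z : Ch G q, InVR X Set.univ k q z → ∃ g, InVR X A k q (translateChain g q z)) :
    BoundsCycles X Set.univ q k l := by
  intro z hz hcyc
  obtain ⟨g, hgz⟩ := htrans z hz
  obtain ⟨c, hc, hbd⟩ := hA _ hgz (hcyc.translateChain g)
  refine ⟨translateChain g⁻¹ (q + 1) c, hc.translateChain fun _ _ _ => Set.mem_univ _, ?_⟩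
  rw [bd_translateChain, hbd, translateChain_inv_translateChain]

section Character

variable {G : Type*} [Group G] {χ : G → ℝ}

def toAddMonoidHomOfMapMul (hom : ∀ g h : G, χ (g * h) = χ g + χ h) : Additive G →+ ℝ :=
  AddMonoidHom.mk' (fun g => χ g.toMul) fun g h => hom g.toMul h.toMul

lemma exists_pos_of_hom (hom : ∀ g h : G, χ (g * h) = χ g + χ h) (hχ : χ ≠ 0) :
    ∃ t, 0 < χ t := by
  obtain ⟨g, hg⟩ := Function.ne_iff.mp hχ
  have hinv : χ g⁻¹ = -χ g := map_neg (toAddMonoidHomOfMapMul hom) (Additive.ofMul g)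
  rcases hg.lt_or_gt with hneg | hpos
  · exact ⟨g⁻¹, by rw [hinv]; exact neg_pos.mpr hneg⟩
  · exact ⟨g, hpos⟩

lemma exists_nonneg_pow_mul (hom : ∀ g h : G, χ (g * h) = χ g + χ h) {t : G} (ht : 0 < χ t)
    (S : Finset G) : ∃ n : ℕ, ∀ s ∈ S, 0 ≤ χ (t ^ n * s) := by
  choose N hN using fun s : G => Archimedean.arch (-χ s) ht
  refine ⟨S.sup N, fun s hs => ?_⟩
  have hpow : χ (t ^ S.sup N) = S.sup N • χ t :=
    map_nsmul (toAddMonoidHomOfMapMul hom) (S.sup N) (Additive.ofMul t)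
  have hle : N s • χ t ≤ S.sup N • χ t := nsmul_le_nsmul_left ht.le (S.le_sup hs)
  rw [hom, hpow]
  linarith [hN s]

lemma exists_translateChain_inVR_nonneg (hom : ∀ g h : G, χ (g * h) = χ g + χ h)
    {t : G} (ht : 0 < χ t) {X : Set G} {k q : ℕ} {z : Ch G q} (hz : InVR X Set.univ k q z) :
    ∃ g, InVR X {g : G | 0 ≤ χ g} k q (translateChain g q z) := by
  classical
  obtain ⟨n, hn⟩ := exists_nonneg_pow_mul hom ht (z.support.biUnion fun f => Finset.univ.image f)
  refine ⟨t ^ n, hz.translateChain fun f hf i => hn _ ?_⟩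
  exact Finset.mem_biUnion.mpr ⟨f, hf, Finset.mem_image_of_mem f (Finset.mem_univ i)⟩

end Character

theorem stmt11_general {G : Type*} [Group G] (X : Set G)
    (χ : G → ℝ) (hom : ∀ g h : G, χ (g * h) = χ g + χ h) (hχ : χ ≠ 0) (m : ℕ) :
    -- if G_χ is of type FP_m in the coarse sense, then so is G
    (CoarseFP X {g : G | 0 ≤ χ g} m → CoarseFP X Set.univ m) ∧
    -- in particular, degreewise: if H̃_q(VR_k(G_χ)) vanishes in VR_l(G_χ), then
    -- every cycle of VR_k(G) becomes a boundary in VR_l(G)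
    (∀ q < m, ∀ k l : ℕ,
      (∀ z : Ch G q, InVR X {g : G | 0 ≤ χ g} k q z → IsCyc q z →
        ∃ c : Ch G (q + 1), InVR X {g : G | 0 ≤ χ g} l (q + 1) c ∧ bd G q c = z) →
      ∀ z : Ch G q, InVR X Set.univ k q z → IsCyc q z →
        ∃ c : Ch G (q + 1), InVR X Set.univ l (q + 1) c ∧ bd G q c = z) := by
  obtain ⟨t, ht⟩ := exists_pos_of_hom hom hχ
  have key (q k l : ℕ) (H : BoundsCycles X {g : G | 0 ≤ χ g} q k l) :
      BoundsCycles X Set.univ q k l :=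
    boundsCycles_univ_of_translateChain H fun _ hz => exists_translateChain_inVR_nonneg hom ht hz
  exact ⟨fun hFP q hq k => (hFP q hq k).imp fun _ ⟨hkl, H⟩ => ⟨hkl, key q k _ H⟩,
    fun q _ k l => key q k l⟩

theorem stmt11 {G : Type*} [Group G] (X : Set G)
    (hXfin : X.Finite) (hXsymm : X⁻¹ = X) (hX1 : (1 : G) ∈ X)
    (hXgen : Subgroup.closure X = ⊤)
    (χ : G → ℝ) (hom : ∀ g h : G, χ (g * h) = χ g + χ h) (hχ : χ ≠ 0) (m : ℕ) :
    -- if G_χ is of type FP_m in the coarse sense, then so is G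
    (CoarseFP X {g : G | 0 ≤ χ g} m → CoarseFP X Set.univ m) ∧
    -- in particular, degreewise: if H̃_q(VR_k(G_χ)) vanishes in VR_l(G_χ), then
    -- every cycle of VR_k(G) becomes a boundary in VR_l(G)
    (∀ q < m, ∀ k l : ℕ,
      (∀ z : Ch G q, InVR X {g : G | 0 ≤ χ g} k q z → IsCyc q z →
        ∃ c : Ch G (q + 1), InVR X {g : G | 0 ≤ χ g} l (q + 1) c ∧ bd G q c = z) →
      ∀ z : Ch G q, InVR X Set.univ k q z → IsCyc q z →
        ∃ c : Ch G (q + 1), InVR X Set.univ l (q + 1) c ∧ bd G q c = z) :=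
  stmt11_general X χ hom hχ m
end

section
/- Let S ∈ ℤ[X^{q+1}] be a q-shape such that its connected components are S = S₁ + ... + S_n, and suppose T := ∂_q S is connected and nonzero. Then ∂_q S_i = T for exactly one index i, and ∂_q S_j = 0 for all j ≠ i. -/
/-- The vertex set `S^{(0)}` of a shape. -/
def S0 {V : Type*} {q : ℕ} (S : Ch V q) : Set V :=
  {x | ∃ f ∈ S.support, ∃ i, f i = x}

/-- The edge set `S^{(1)}` of a shape. -/
def S1 {V : Type*} {q : ℕ} (S : Ch V q) : Set (V × V) :=
  {p | ∃ f ∈ S.support, ∃ i j, f i = p.1 ∧ f j = p.2}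

/-- A shape is connected if it is nonzero and the graph `(S^{(0)}, S^{(1)})`
is connected. -/
def ShConn {V : Type*} {q : ℕ} (S : Ch V q) : Prop :=
  S ≠ 0 ∧ ∀ x ∈ S0 S, ∀ y ∈ S0 S,
    Relation.ReflTransGen (fun a b : V => (a, b) ∈ S1 S) x y

section

variable {V : Type*} {q : ℕ}

lemma exists_eq_comp_succAbove_of_mem_support_bd {c : Ch V (q + 1)}
    {g : Fin (q + 1) → V} (hg : g ∈ (bd V q c).support) :
    ∃ f ∈ c.support, ∃ k : Fin (q + 2), g = f ∘ k.succAbove := by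
  have hbd : bd V q c = ∑ f ∈ c.support,
      c f • ∑ i : Fin (q + 2), ((-1 : ℤ) ^ (i : ℕ)) • Finsupp.single (f ∘ i.succAbove) 1 := by
    rw [bd, Finsupp.lift_apply]; rfl
  rw [hbd] at hg
  obtain ⟨f, hf, hgf⟩ := Finsupp.mem_support_finsetSum g hg
  obtain ⟨k, -, hgk⟩ := Finsupp.mem_support_finsetSum g (Finsupp.support_smul hgf)
  exact ⟨f, hf, k, Finset.mem_singleton.1 <|
    Finsupp.support_single_subset (Finsupp.support_smul hgk)⟩

lemma S0_bd_subset (c : Ch V (q + 1)) : S0 (bd V q c) ⊆ S0 c := by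
  rintro x ⟨g, hg, i, rfl⟩
  obtain ⟨f, hf, k, rfl⟩ := exists_eq_comp_succAbove_of_mem_support_bd hg
  exact ⟨f, hf, k.succAbove i, rfl⟩

section DisjointSum

variable {ι : Type*} [Fintype ι] {T : ι → Ch V q}

lemma exists_mem_S0_of_mem_S1_sum {a b : V} (hab : (a, b) ∈ S1 (∑ i, T i)) :
    ∃ m, a ∈ S0 (T m) ∧ b ∈ S0 (T m) := by
  obtain ⟨f, hf, i, j, rfl, rfl⟩ := hab
  obtain ⟨m, -, hm⟩ := Finsupp.mem_support_finsetSum f hf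
  exact ⟨m, ⟨f, hm, i, rfl⟩, ⟨f, hm, j, rfl⟩⟩

variable (hdisj : Pairwise fun i j => Disjoint (S0 (T i)) (S0 (T j)))
include hdisj

lemma sum_apply_eq_of_mem_support {m : ι} {f : Fin (q + 1) → V} (hf : f ∈ (T m).support) :
    (∑ i, T i) f = T m f := by
  rw [Finset.sum_apply']
  refine Finset.sum_eq_single m (fun j _ hjm => ?_) (by simp)
  by_contra hne
  exact Set.disjoint_left.1 (hdisj hjm) ⟨f, Finsupp.mem_support_iff.2 hne, 0, rfl⟩
    ⟨f, hf, 0, rfl⟩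

lemma S0_subset_S0_sum (m : ι) : S0 (T m) ⊆ S0 (∑ i, T i) := by
  rintro x ⟨f, hf, k, rfl⟩
  refine ⟨f, ?_, k, rfl⟩
  rw [Finsupp.mem_support_iff, sum_apply_eq_of_mem_support hdisj hf]
  exact Finsupp.mem_support_iff.1 hf

lemma mem_S0_of_reflTransGen_S1_sum {m : ι} {x y : V} (hx : x ∈ S0 (T m))
    (hxy : Relation.ReflTransGen (fun a b => (a, b) ∈ S1 (∑ i, T i)) x y) :
    y ∈ S0 (T m) := by
  induction hxy with
  | refl => exact hx
  | tail _ hbc ih =>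
    obtain ⟨m', hb, hc⟩ := exists_mem_S0_of_mem_S1_sum hbc
    obtain rfl : m' = m := by
      by_contra hne
      exact Set.disjoint_left.1 (hdisj hne) hb ih
    exact hc

lemma exists_forall_ne_eq_zero_of_shConn_sum (hT : ShConn (∑ i, T i)) :
    ∃ i, ∀ j, j ≠ i → T j = 0 := by
  obtain ⟨i, hi⟩ : ∃ i, T i ≠ 0 := by
    by_contra! hall
    exact hT.1 (Finset.sum_eq_zero fun i _ => hall i)
  refine ⟨i, fun j hji => ?_⟩
  by_contra hj
  obtain ⟨f, hf⟩ := Finsupp.support_nonempty_iff.2 hi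
  obtain ⟨g, hg⟩ := Finsupp.support_nonempty_iff.2 hj
  have hfi : f 0 ∈ S0 (T i) := ⟨f, hf, 0, rfl⟩
  have hgj : g 0 ∈ S0 (T j) := ⟨g, hg, 0, rfl⟩
  have hpath := hT.2 _ (S0_subset_S0_sum hdisj i hfi) _ (S0_subset_S0_sum hdisj j hgj)
  exact Set.disjoint_left.1 (hdisj hji.symm)
    (mem_S0_of_reflTransGen_S1_sum hdisj hfi hpath) hgj

end DisjointSum

end

theorem stmt12_general {V : Type*} (q n : ℕ) (S : Ch V (q + 1))
    (P : Fin n → Ch V (q + 1))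
    -- S = S₁ + … + S_n is the decomposition into connected components
    (hsum : S = ∑ i, P i)
    (hdisj : ∀ i j, i ≠ j → Disjoint (S0 (P i)) (S0 (P j)))
    -- T = ∂S is connected and nonzero
    (hT : ShConn (bd V q S)) :
    ∃ i, bd V q (P i) = bd V q S ∧ ∀ j, j ≠ i → bd V q (P j) = 0 := by
  have hbd : bd V q S = ∑ i, bd V q (P i) := by rw [hsum, map_sum]
  have hdisj_bd : Pairwise fun i j => Disjoint (S0 (bd V q (P i))) (S0 (bd V q (P j))) :=
    fun i j hij => (hdisj i j hij).mono (S0_bd_subset _) (S0_bd_subset _)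
  rw [hbd] at hT ⊢
  obtain ⟨i, hzero⟩ := exists_forall_ne_eq_zero_of_shConn_sum hdisj_bd hT
  exact ⟨i, (Finset.sum_eq_single i (fun j _ => hzero j) (by simp)).symm, hzero⟩

theorem stmt12 {V : Type*} [Infinite V] (q n : ℕ) (S : Ch V (q + 1))
    (P : Fin n → Ch V (q + 1))
    -- S = S₁ + … + S_n is the decomposition into connected components
    (hsum : S = ∑ i, P i)
    (hconn : ∀ i, ShConn (P i))
    (hdisj : ∀ i j, i ≠ j → Disjoint (S0 (P i)) (S0 (P j)))
    -- T = ∂S is connected and nonzero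
    (hT : ShConn (bd V q S)) :
    ∃ i, bd V q (P i) = bd V q S ∧ ∀ j, j ≠ i → bd V q (P j) = 0 :=
  stmt12_general q n S P hsum hdisj hT
end
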